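/- arXiv:1201.4760 — 6 statements merged into one kernel-verified Lean document; each statement's English description precedes it below -/
import Mathlib

section
/- Let θ be C², convex, even, with |θ'| ≤ 1 and θ'' ≥ 0, and M(x,y) = (x+y+θ(x−y))/2. If φ, ψ : I → ℝ are C² functions on an interval I with φ''(t) > 0 and ψ''(t) > 0 for all t, then the function t ↦ M(φ(t), ψ(t)) has strictly positive second derivative on I. -/
/-!
Differentiating twice, `2 M(φ, ψ)'' = (1 + θ') φ'' + (1 - θ') ψ'' + θ'' (φ' - ψ')²` with `θ', θ''`
taken at `φ - ψ`. The last term is nonnegative, and since `|θ'| ≤ 1` the weights `1 ± θ'` are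
nonnegative with sum `2`, so one of them is at least `1` and the first two terms are positive.
-/

theorem iteratedDeriv_two_add_add_comp_sub {𝕜 : Type*} [NontriviallyNormedField 𝕜]
    {θ φ ψ : 𝕜 → 𝕜} {t : 𝕜} (hθ : ContDiffAt 𝕜 2 θ (φ t - ψ t))
    (hφ : ContDiffAt 𝕜 2 φ t) (hψ : ContDiffAt 𝕜 2 ψ t) :
    iteratedDeriv 2 (fun s => φ s + ψ s + θ (φ s - ψ s)) t =
      (1 + deriv θ (φ t - ψ t)) * iteratedDeriv 2 φ t
        + (1 - deriv θ (φ t - ψ t)) * iteratedDeriv 2 ψ t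
        + iteratedDeriv 2 θ (φ t - ψ t) * (deriv φ t - deriv ψ t) ^ 2 := by
  have hsub : ContDiffAt 𝕜 2 (φ - ψ) t := hφ.sub hψ
  change iteratedDeriv 2 (φ + ψ + θ ∘ (φ - ψ)) t = _
  rw [iteratedDeriv_add (f := φ + ψ) (hφ.add hψ) (hθ.comp t hsub), iteratedDeriv_add hφ hψ,
    iteratedDeriv_comp_two (f := φ - ψ) hθ hsub, iteratedDeriv_sub hφ hψ,
    deriv_sub (hφ.differentiableAt two_ne_zero) (hψ.differentiableAt two_ne_zero)]
  simp only [Pi.sub_apply]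
  ring

theorem one_add_mul_add_one_sub_mul_pos {𝕜 : Type*} [Field 𝕜] [LinearOrder 𝕜]
    [IsStrictOrderedRing 𝕜] {a x y : 𝕜} (ha : |a| ≤ 1) (hx : 0 < x) (hy : 0 < y) :
    0 < (1 + a) * x + (1 - a) * y := by
  obtain ⟨hle, hge⟩ := abs_le.mp ha
  rcases le_total 0 a with h | h
  · nlinarith
  · nlinarith

theorem smooth_max_strongly_convex_comp_general (θ : ℝ → ℝ)
    (hθ : ContDiff ℝ 2 θ)
    (hθ' : ∀ t, |deriv θ t| ≤ 1)
    (hθ'' : ∀ t, 0 ≤ iteratedDeriv 2 θ t)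
    (I : Set ℝ)
    (φ ψ : ℝ → ℝ) (hφ : ContDiff ℝ 2 φ) (hψ : ContDiff ℝ 2 ψ)
    (hφ'' : ∀ t ∈ I, 0 < iteratedDeriv 2 φ t)
    (hψ'' : ∀ t ∈ I, 0 < iteratedDeriv 2 ψ t) :
    ∀ t ∈ I, 0 < iteratedDeriv 2 (fun s => (φ s + ψ s + θ (φ s - ψ s)) / 2) t := by
  intro t ht
  rw [iteratedDeriv_div_const,
    iteratedDeriv_two_add_add_comp_sub hθ.contDiffAt hφ.contDiffAt hψ.contDiffAt]
  exact div_pos (add_pos_of_pos_of_nonneg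
    (one_add_mul_add_one_sub_mul_pos (hθ' _) (hφ'' t ht) (hψ'' t ht))
    (mul_nonneg (hθ'' _) (sq_nonneg _))) two_pos

/-- If θ is C², convex, even, with |θ'| ≤ 1 and θ'' ≥ 0, and
`M(x,y) = (x+y+θ(x-y))/2`, then for C² functions φ, ψ with strictly positive
second derivative on an open interval-like set `I`, the function
`t ↦ M (φ t) (ψ t)` has strictly positive second derivative on `I`. -/
theorem smooth_max_strongly_convex_comp (θ : ℝ → ℝ)
    (hθ : ContDiff ℝ 2 θ)
    (hconv : ConvexOn ℝ Set.univ θ)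
    (heven : ∀ t, θ (-t) = θ t)
    (hθ' : ∀ t, |deriv θ t| ≤ 1)
    (hθ'' : ∀ t, 0 ≤ iteratedDeriv 2 θ t)
    (I : Set ℝ) (hI : IsOpen I)
    (φ ψ : ℝ → ℝ) (hφ : ContDiff ℝ 2 φ) (hψ : ContDiff ℝ 2 ψ)
    (hφ'' : ∀ t ∈ I, 0 < iteratedDeriv 2 φ t)
    (hψ'' : ∀ t ∈ I, 0 < iteratedDeriv 2 ψ t) :
    ∀ t ∈ I, 0 < iteratedDeriv 2 (fun s => (φ s + ψ s + θ (φ s - ψ s)) / 2) t :=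
  smooth_max_strongly_convex_comp_general θ hθ hθ' hθ'' I φ ψ hφ hψ hφ'' hψ''
end

section
/- The function f : ℝ^d → ℝ, f(x) = max{0, x₁, x₂, ..., x_d}, can be uniformly approximated on all of ℝ^d by C^∞ strongly convex functions: for every ε > 0 there exists a C^∞ function g : ℝ^d → ℝ with positive definite Hessian everywhere such that f ≤ g ≤ f + ε on ℝ^d. -/
open Real Finset

set_option maxHeartbeats 1000000
set_option synthInstance.maxHeartbeats 1000000

namespace CornerAux

variable {d : ℕ}

noncomputable def u (c : ℝ) (i : Fin d) (x : Fin d → ℝ) : ℝ := Real.exp (x i / c)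
noncomputable def Fm (c : ℝ) (x : Fin d → ℝ) : ℝ := 1 + ∑ i, u c i x
noncomputable def gc (c : ℝ) (x : Fin d → ℝ) : ℝ := c * Real.log (Fm c x)

noncomputable def K (c : ℝ) (i : Fin d) : (Fin d → ℝ) →L[ℝ] ℝ :=
  c⁻¹ • ContinuousLinearMap.proj i

noncomputable def A (c : ℝ) (i : Fin d) (x : Fin d → ℝ) : (Fin d → ℝ) →L[ℝ] ℝ :=
  u c i x • K c i

noncomputable def B (c : ℝ) (x : Fin d → ℝ) : (Fin d → ℝ) →L[ℝ] ℝ := ∑ i, A c i x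

noncomputable def B2 (c : ℝ) (x : Fin d → ℝ) : (Fin d → ℝ) →L[ℝ] (Fin d → ℝ) →L[ℝ] ℝ :=
  ∑ i, (A c i x).smulRight (K c i)

noncomputable def G (c : ℝ) (x : Fin d → ℝ) : (Fin d → ℝ) →L[ℝ] ℝ :=
  c • ((Fm c x)⁻¹ • B c x)

noncomputable def H (c : ℝ) (x : Fin d → ℝ) : (Fin d → ℝ) →L[ℝ] (Fin d → ℝ) →L[ℝ] ℝ :=
  c • ((Fm c x)⁻¹ • B2 c x + ((-(Fm c x ^ 2)⁻¹) • B c x).smulRight (B c x))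

lemma upos (c : ℝ) (i : Fin d) (x : Fin d → ℝ) : 0 < u c i x := Real.exp_pos _

lemma Fpos (c : ℝ) (x : Fin d → ℝ) : 0 < Fm c x := by
  have : (0:ℝ) ≤ ∑ i, u c i x :=
    Finset.sum_nonneg fun i _ => (Real.exp_pos _).le
  unfold Fm; linarith

lemma hu (c : ℝ) (i : Fin d) (x : Fin d → ℝ) : HasFDerivAt (u c i) (A c i x) x := by
  have h0 : HasFDerivAt (fun x : Fin d → ℝ => x i / c) (K c i) x := by
    have h1 : (fun x : Fin d → ℝ => x i / c) = ⇑(K c i) := by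
      funext y
      simp [K, div_eq_inv_mul]
    rw [h1]
    exact (K c i).hasFDerivAt
  exact h0.exp

lemma hF (c : ℝ) (x : Fin d → ℝ) : HasFDerivAt (Fm c) (B c x) x := by
  have h : HasFDerivAt (fun x : Fin d → ℝ => ∑ i, u c i x) (B c x) x :=
    HasFDerivAt.fun_sum fun i _ => hu c i x
  exact h.const_add 1

lemma hg (c : ℝ) (x : Fin d → ℝ) : HasFDerivAt (gc c) (G c x) x :=
  ((hF c x).log (Fpos c x).ne').const_mul c

lemma hB (c : ℝ) (x : Fin d → ℝ) : HasFDerivAt (B c) (B2 c x) x :=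
  HasFDerivAt.fun_sum fun i _ => (hu c i x).smul_const (K c i)

lemma hG (c : ℝ) (x : Fin d → ℝ) : HasFDerivAt (G c) (H c x) x := by
  have hinv : HasFDerivAt (fun x => (Fm c x)⁻¹) ((-(Fm c x ^ 2)⁻¹) • B c x) x :=
    (hasDerivAt_inv (Fpos c x).ne').comp_hasFDerivAt x (hF c x)
  exact (hinv.smul (hB c x)).const_smul c

lemma Hvv (c : ℝ) (hc : 0 < c) (x v : Fin d → ℝ) :
    H c x v v = ((Fm c x) * (∑ i, u c i x * (v i * v i)) - (∑ i, u c i x * v i) ^ 2)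
      / (c * (Fm c x) ^ 2) := by
  simp [H, B2, B, A, K, ContinuousLinearMap.sum_apply, ContinuousLinearMap.smul_apply,
    ContinuousLinearMap.smulRight_apply, ContinuousLinearMap.proj_apply, smul_eq_mul]
  have e1 : ∑ i, u c i x * (c⁻¹ * v i) * (c⁻¹ * v i)
      = c⁻¹ * (c⁻¹ * ∑ i, u c i x * (v i * v i)) := by
    simp_rw [Finset.mul_sum]
    exact Finset.sum_congr rfl fun i _ => by ring
  have e2 : ∑ i, u c i x * (c⁻¹ * v i) = c⁻¹ * ∑ i, u c i x * v i := by
    rw [Finset.mul_sum]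
    exact Finset.sum_congr rfl fun i _ => by ring
  rw [e1, e2]
  have hF := Fpos c x
  field_simp
  ring

lemma Hpos (c : ℝ) (hc : 0 < c) (x v : Fin d → ℝ) (hv : v ≠ 0) : 0 < H c x v v := by
  rw [Hvv c hc x v]
  have hF := Fpos c x
  obtain ⟨i0, hi0⟩ : ∃ i, v i ≠ 0 := by
    by_contra h
    push_neg at h
    exact hv (funext h)
  have hQ : 0 < ∑ i, u c i x * (v i * v i) := by
    refine Finset.sum_pos' (fun j _ => mul_nonneg (Real.exp_pos _).le (mul_self_nonneg _)) ?_
    exact ⟨i0, Finset.mem_univ i0, mul_pos (Real.exp_pos _) (mul_self_pos.mpr hi0)⟩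
  have hCS : (∑ i, u c i x * v i) ^ 2 ≤ (∑ i, u c i x) * (∑ i, u c i x * (v i * v i)) := by
    have h := Finset.sum_mul_sq_le_sq_mul_sq Finset.univ
      (fun i => Real.sqrt (u c i x)) (fun i => Real.sqrt (u c i x) * v i)
    have e1 : ∑ i, Real.sqrt (u c i x) * (Real.sqrt (u c i x) * v i) = ∑ i, u c i x * v i :=
      Finset.sum_congr rfl fun i _ => by
        rw [← mul_assoc, Real.mul_self_sqrt (upos c i x).le]
    have e2 : ∑ i, Real.sqrt (u c i x) ^ 2 = ∑ i, u c i x :=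
      Finset.sum_congr rfl fun i _ => Real.sq_sqrt (upos c i x).le
    have e3 : ∑ i, (Real.sqrt (u c i x) * v i) ^ 2 = ∑ i, u c i x * (v i * v i) :=
      Finset.sum_congr rfl fun i _ => by
        rw [mul_pow, Real.sq_sqrt (upos c i x).le]; ring
    rw [e1, e2, e3] at h
    exact h
  have hnum : 0 < (Fm c x) * (∑ i, u c i x * (v i * v i)) - (∑ i, u c i x * v i) ^ 2 := by
    have : Fm c x * (∑ i, u c i x * (v i * v i))
        = (∑ i, u c i x * (v i * v i)) + (∑ i, u c i x) * (∑ i, u c i x * (v i * v i)) := by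
      unfold Fm; ring
    rw [this]
    nlinarith
  exact div_pos hnum (by positivity)

lemma key (c : ℝ) (hc : 0 < c) (x v : Fin d → ℝ) (hv : v ≠ 0) :
    0 < iteratedFDeriv ℝ 2 (gc c) x (fun _ => v) := by
  rw [iteratedFDeriv_two_apply]
  have h1 : fderiv ℝ (gc (d := d) c) = G (d := d) c := funext fun y => (hg c y).fderiv
  rw [h1, (hG c x).fderiv]
  exact Hpos c hc x v hv

lemma smooth (c : ℝ) : ContDiff ℝ (⊤ : ℕ∞) (gc (d := d) c) := by
  have h1 : ContDiff ℝ (⊤ : ℕ∞) (Fm (d := d) c) :=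
    contDiff_const.add (ContDiff.sum fun i _ =>
      Real.contDiff_exp.comp
        (((ContinuousLinearMap.proj i : (Fin d → ℝ) →L[ℝ] ℝ)).contDiff.div_const c))
  exact contDiff_const.mul (h1.log fun x => (Fpos c x).ne')

lemma lower (c : ℝ) (hc : 0 < c) (x : Fin d → ℝ) :
    max 0 (⨆ i, x i) ≤ gc c x := by
  have hexp : Real.exp (max 0 (⨆ i, x i) / c) ≤ Fm c x := by
    rcases le_total (⨆ i, x i) 0 with hS | hS
    · rw [max_eq_left hS]
      simp only [zero_div, Real.exp_zero]
      have : (0:ℝ) ≤ ∑ i, u c i x := Finset.sum_nonneg fun i _ => (Real.exp_pos _).le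
      unfold Fm; linarith
    · rw [max_eq_right hS]
      rcases isEmpty_or_nonempty (Fin d) with he | hne
      · rw [Real.iSup_of_isEmpty]
        simp only [zero_div, Real.exp_zero]
        have : (0:ℝ) ≤ ∑ i, u c i x := Finset.sum_nonneg fun i _ => (Real.exp_pos _).le
        unfold Fm; linarith
      · obtain ⟨i0, hi0⟩ := exists_eq_ciSup_of_finite (f := x)
        rw [← hi0]
        have h1 : u c i0 x ≤ ∑ i, u c i x :=
          Finset.single_le_sum (f := fun i => u c i x) (fun i _ => (upos c i x).le)
            (Finset.mem_univ i0)
        show u c i0 x ≤ Fm c x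
        unfold Fm
        linarith
  have h2 : max 0 (⨆ i, x i) / c ≤ Real.log (Fm c x) :=
    (Real.le_log_iff_exp_le (Fpos c x)).mpr hexp
  rw [div_le_iff₀ hc] at h2
  rw [gc]; linarith [h2]

lemma upper (c : ℝ) (hc : 0 < c) (x : Fin d → ℝ) :
    gc c x ≤ max 0 (⨆ i, x i) + c * Real.log (d + 1) := by
  set M := max 0 (⨆ i, x i) with hM
  have hM0 : 0 ≤ M := le_max_left _ _
  have hx : ∀ i, x i ≤ M := fun i =>
    le_trans (le_ciSup (Finite.bddAbove_range x) i) (le_max_right _ _)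
  have hume : ∀ i, u c i x ≤ Real.exp (M / c) := fun i =>
    Real.exp_le_exp.mpr (by gcongr; exact hx i)
  have hsum : ∑ i, u c i x ≤ (d:ℝ) * Real.exp (M / c) := by
    calc ∑ i, u c i x ≤ ∑ _i : Fin d, Real.exp (M / c) :=
          Finset.sum_le_sum fun i _ => hume i
      _ = (d:ℝ) * Real.exp (M / c) := by simp
  have hone : (1:ℝ) ≤ Real.exp (M / c) := Real.one_le_exp (by positivity)
  have h1 : Fm c x ≤ ((d:ℝ) + 1) * Real.exp (M / c) := by
    have he : ((d:ℝ) + 1) * Real.exp (M / c)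
        = (d:ℝ) * Real.exp (M / c) + Real.exp (M / c) := by ring
    unfold Fm; rw [he]; linarith
  have h2 : Real.log (Fm c x) ≤ Real.log ((d:ℝ) + 1) + M / c := by
    have h3 := Real.log_le_log (Fpos c x) h1
    rwa [Real.log_mul (by positivity) (Real.exp_ne_zero _), Real.log_exp] at h3
  have h4 : c * Real.log (Fm c x) ≤ c * (Real.log ((d:ℝ) + 1) + M / c) :=
    mul_le_mul_of_nonneg_left h2 hc.le
  have h5 : c * (Real.log ((d:ℝ) + 1) + M / c) = M + c * Real.log ((d:ℝ) + 1) := by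
    field_simp
    ring
  rw [gc]
  push_cast at h4 h5
  linarith

end CornerAux

/-- The corner function `f x = max {0, x₁, ..., x_d}` can be uniformly
approximated on ℝ^d by C^∞ strongly convex functions (positive definite
second derivative everywhere). -/
theorem corner_approx_strongly_convex (d : ℕ) (ε : ℝ) (hε : 0 < ε) :
    ∃ g : (Fin d → ℝ) → ℝ,
      ContDiff ℝ (⊤ : ℕ∞) g ∧
      (∀ (x v : Fin d → ℝ), v ≠ 0 →
        0 < iteratedFDeriv ℝ 2 g x (fun _ => v)) ∧
      (∀ x : Fin d → ℝ,
        max 0 (⨆ i, x i) ≤ g x ∧ g x ≤ max 0 (⨆ i, x i) + ε) := by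
  have hlog : 0 < Real.log ((d:ℝ) + 2) := by
    apply Real.log_pos
    have : (0:ℝ) ≤ (d:ℝ) := Nat.cast_nonneg d
    linarith
  set c : ℝ := ε / Real.log ((d:ℝ) + 2) with hcdef
  have hc : 0 < c := div_pos hε hlog
  refine ⟨CornerAux.gc c, CornerAux.smooth c, fun x v hv => CornerAux.key c hc x v hv,
    fun x => ⟨CornerAux.lower c hc x, ?_⟩⟩
  have h1 := CornerAux.upper c hc x
  have h2 : c * Real.log ((d:ℝ) + 1) ≤ c * Real.log ((d:ℝ) + 2) :=
    mul_le_mul_of_nonneg_left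
      (Real.log_le_log (by positivity) (by linarith)) hc.le
  have h3 : c * Real.log ((d:ℝ) + 2) = ε := div_mul_cancel₀ ε hlog.ne'
  push_cast at h1
  linarith
end

section
/- Let U ⊆ ℝ^n be open and convex, f : U → ℝ a differentiable convex function, and x₀ ∈ U. If f is not supported at x₀ by any (n+1)-dimensional corner function, then there exist k < n, a linear projection P : ℝ^n → ℝ^k, a convex function c : P(U) → ℝ, and a linear function ℓ : ℝ^n → ℝ such that f = c ∘ P + ℓ. -/
set_option maxHeartbeats 1000000
open Set Filter Topology Module Submodule

lemma tangent_le {n : ℕ} {U : Set (Fin n → ℝ)} (hUo : IsOpen U) (hUc : Convex ℝ U)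
    {f : (Fin n → ℝ) → ℝ} (hf : ConvexOn ℝ U f) (hdiff : DifferentiableOn ℝ f U)
    {x y : Fin n → ℝ} (hx : x ∈ U) (hy : y ∈ U) :
    f y + fderiv ℝ f y (x - y) ≤ f x := by
  have hdy : DifferentiableAt ℝ f y := (hdiff y hy).differentiableAt (hUo.mem_nhds hy)
  set v := x - y with hv
  have h1 : HasDerivAt (fun t : ℝ => y + t • v) v 0 := by
    simpa using ((hasDerivAt_id (0:ℝ)).smul_const v).const_add y
  have hφ : HasDerivAt (fun t : ℝ => f (y + t • v)) (fderiv ℝ f y v) 0 := by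
    have h2 : HasFDerivAt f (fderiv ℝ f y) (y + (0:ℝ) • v) := by
      simpa using hdy.hasFDerivAt
    exact h2.comp_hasDerivAt 0 h1
  have key : Tendsto (slope (fun t : ℝ => f (y + t • v)) 0) (𝓝[>] 0)
      (𝓝 (fderiv ℝ f y v)) :=
    (hasDerivAt_iff_tendsto_slope.1 hφ).mono_left
      (nhdsWithin_mono _ fun t ht => ne_of_gt ht)
  have hle : ∀ᶠ t in 𝓝[>] (0:ℝ),
      slope (fun t : ℝ => f (y + t • v)) 0 t ≤ f x - f y := by
    filter_upwards [Ioo_mem_nhdsGT_of_mem (by norm_num : (0:ℝ) ∈ Ico 0 1)] with t ht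
    have h0t : (0:ℝ) < t := ht.1
    have hcomb : (1 - t) • y + t • x = y + t • v := by
      rw [hv]; module
    have hmem : y + t • v ∈ U := by
      rw [← hcomb]
      exact hUc hy hx (by linarith [ht.2]) h0t.le (by ring)
    have hcv : f (y + t • v) ≤ (1 - t) * f y + t * f x := by
      have := hf.2 hy hx (show (0:ℝ) ≤ 1 - t by linarith [ht.2]) h0t.le (by ring)
      rw [hcomb] at this
      simpa [smul_eq_mul] using this
    rw [slope_def_field]
    simp only [zero_smul, add_zero, sub_zero]
    rw [div_le_iff₀ h0t]
    nlinarith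
  have := le_of_tendsto key hle
  linarith


/-- A convex differentiable function on an open convex `U ⊆ ℝⁿ` which is not
supported at some `x₀ ∈ U` by any `(n+1)`-dimensional corner function factors
as `c ∘ P + ℓ` with `P` a linear projection onto `ℝᵏ`, `k < n`. -/
theorem not_corner_supported_factors (n : ℕ) (U : Set (Fin n → ℝ))
    (hUo : IsOpen U) (hUc : Convex ℝ U)
    (f : (Fin n → ℝ) → ℝ) (hf : ConvexOn ℝ U f)
    (hdiff : DifferentiableOn ℝ f U)
    (x₀ : Fin n → ℝ) (hx₀ : x₀ ∈ U)
    (hcorner : ¬ ∃ (ℓ : Fin (n + 1) → (Fin n → ℝ) →ₗ[ℝ] ℝ) (b : Fin (n + 1) → ℝ),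
        LinearIndependent ℝ
          (fun j : Fin (n + 1) =>
            (LinearMap.snd ℝ (Fin n → ℝ) ℝ) -
              (ℓ j).comp (LinearMap.fst ℝ (Fin n → ℝ) ℝ)) ∧
        (∀ x ∈ U, (⨆ j, (ℓ j x + b j)) ≤ f x) ∧
        (⨆ j, (ℓ j x₀ + b j)) = f x₀) :
    ∃ (k : ℕ), k < n ∧
      ∃ (P : (Fin n → ℝ) →ₗ[ℝ] (Fin k → ℝ)) (c : (Fin k → ℝ) → ℝ)
        (ℓ₀ : (Fin n → ℝ) →ₗ[ℝ] ℝ),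
        Function.Surjective P ∧
        ConvexOn ℝ (P '' U) c ∧
        ∀ x ∈ U, f x = c (P x) + ℓ₀ x := by
  classical
  set g : (Fin n → ℝ) → ((Fin n → ℝ) →ₗ[ℝ] ℝ) :=
    fun y => (fderiv ℝ f y).toLinearMap with hg
  have tang : ∀ x ∈ U, ∀ y ∈ U, f y + g y (x - y) ≤ f x := fun x hx y hy =>
    tangent_le hUo hUc hf hdiff hx hy
  set S : Set ((Fin n → ℝ) →ₗ[ℝ] ℝ) := (fun y => g y - g x₀) '' U with hS
  set W : Submodule ℝ ((Fin n → ℝ) →ₗ[ℝ] ℝ) := Submodule.span ℝ S with hW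
  have hfinV : finrank ℝ (Fin n → ℝ) = n := by simp
  have hfinD : finrank ℝ ((Fin n → ℝ) →ₗ[ℝ] ℝ) = n := by
    exact (Subspace.dual_finrank_eq (K := ℝ) (V := Fin n → ℝ)).trans hfinV
  -- Step A : finrank W < n
  have hWlt : finrank ℝ W < n := by
    by_contra hlt
    have hWn : finrank ℝ W = n := by
      have h := W.finrank_le
      rw [hfinD] at h
      exact le_antisymm h (le_of_not_gt hlt)
    have hWtop : W = ⊤ := Submodule.eq_top_of_finrank_eq (by rw [hWn, hfinD])
    -- extract a linearly independent family of size n inside S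
    obtain ⟨t, hts, htspan, htli⟩ := exists_linearIndependent ℝ S
    have htfin : t.Finite := htli.setFinite
    haveI : Fintype t := htfin.fintype
    have hcard : t.toFinset.card = n := by
      have h1 : finrank ℝ (span ℝ t) = t.toFinset.card := by
        rw [finrank_span_set_eq_card htli]
      rw [htspan, ← hW, hWtop] at h1
      rw [← h1, finrank_top, hfinD]
    have e : Fin n ≃ t := by
      refine (Fintype.equivFinOfCardEq ?_).symm
      rw [← Set.toFinset_card, hcard]
    set D : Fin n → ((Fin n → ℝ) →ₗ[ℝ] ℝ) := fun i => (e i : _) with hD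
    have hDli : LinearIndependent ℝ D := htli.comp e e.injective
    have hDS : ∀ i, D i ∈ S := fun i => hts (e i).2
    -- choose points realizing these gradient differences
    have hDy : ∀ i, ∃ y, y ∈ U ∧ g y - g x₀ = D i := by
      intro i; obtain ⟨y, hyU, hyD⟩ := hDS i; exact ⟨y, hyU, hyD⟩
    choose y hyU hyD using hDy
    -- build the corner
    set L : Fin (n + 1) → ((Fin n → ℝ) →ₗ[ℝ] ℝ) :=
      Fin.cons (g x₀) (fun i => g (y i)) with hLdef
    set B : Fin (n + 1) → ℝ :=
      Fin.cons (f x₀ - g x₀ x₀) (fun i => f (y i) - g (y i) (y i)) with hBdef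
    have hub : ∀ x ∈ U, (⨆ j, (L j x + B j)) ≤ f x := by
      intro x hx
      refine ciSup_le fun j => ?_
      induction j using Fin.cases with
      | zero =>
        have := tang x hx x₀ hx₀
        rw [map_sub] at this
        simp only [hLdef, hBdef, Fin.cons_zero]
        linarith
      | succ i =>
        have := tang x hx (y i) (hyU i)
        rw [map_sub] at this
        simp only [hLdef, hBdef, Fin.cons_succ]
        linarith
    refine hcorner ⟨L, B, ?_, hub, ?_⟩
    · -- linear independence
      rw [Fintype.linearIndependent_iff]
      intro a hsum
      have h1 : ∑ j, a j = 0 := by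
        have h := LinearMap.congr_fun hsum ((0 : Fin n → ℝ), (1 : ℝ))
        simpa [LinearMap.sum_apply, LinearMap.smul_apply, LinearMap.sub_apply,
          LinearMap.comp_apply, smul_eq_mul] using h
      have h2 : ∀ x : Fin n → ℝ, ∑ j, a j * L j x = 0 := by
        intro x
        have h := LinearMap.congr_fun hsum ((x : Fin n → ℝ), (0 : ℝ))
        simp only [LinearMap.sum_apply, LinearMap.smul_apply, LinearMap.sub_apply,
          LinearMap.comp_apply, LinearMap.snd_apply, LinearMap.fst_apply,
          smul_eq_mul, LinearMap.zero_apply] at h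
        have h' : ∑ j, -(a j * L j x) = 0 := by
          rw [← h]; congr 1; funext j; ring
        rw [Finset.sum_neg_distrib] at h'
        linarith
      have h3 : ∑ i : Fin n, a i.succ • D i = 0 := by
        apply LinearMap.ext
        intro x
        simp only [LinearMap.sum_apply, LinearMap.smul_apply, smul_eq_mul,
          LinearMap.zero_apply]
        have hDx : ∀ i, D i x = g (y i) x - g x₀ x := by
          intro i
          rw [← hyD i, LinearMap.sub_apply]
        have h2x := h2 x
        rw [Fin.sum_univ_succ] at h2x h1
        simp only [hLdef, Fin.cons_zero, Fin.cons_succ] at h2x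
        have expand : ∑ i : Fin n, a i.succ * D i x
            = (∑ i : Fin n, a i.succ * g (y i) x)
              - (∑ i : Fin n, a i.succ) * g x₀ x := by
          rw [Finset.sum_mul, ← Finset.sum_sub_distrib]
          refine Finset.sum_congr rfl fun i _ => ?_
          rw [hDx i]; ring
        rw [expand]
        have hs : (∑ i : Fin n, a i.succ) = -a 0 := by linarith
        rw [hs]
        linarith
      have h4 : ∀ i : Fin n, a i.succ = 0 :=
        Fintype.linearIndependent_iff.1 hDli _ h3
      intro j
      induction j using Fin.cases with
      | zero =>
        rw [Fin.sum_univ_succ] at h1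
        simpa [h4] using h1
      | succ i => exact h4 i
    · -- equality at x₀
      refine le_antisymm (hub x₀ hx₀) ?_
      have h0 : L 0 x₀ + B 0 = f x₀ := by
        simp [hLdef, hBdef]
      rw [← h0]
      exact le_ciSup (f := fun j => L j x₀ + B j) (Set.Finite.bddAbove (Set.finite_range _)) 0
  -- Step B : construct the factorization
  set K : Submodule ℝ (Fin n → ℝ) :=
    (W : Subspace ℝ (Module.Dual ℝ (Fin n → ℝ))).dualCoannihilator with hK
  have hKfin : finrank ℝ W + finrank ℝ K = n := by
    have h := Subspace.finrank_add_finrank_dualCoannihilator_eq W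
    rwa [hfinV] at h
  have hQ : finrank ℝ ((Fin n → ℝ) ⧸ K) = finrank ℝ W := by
    have h2 := Submodule.finrank_quotient_add_finrank K
    rw [hfinV] at h2; omega
  set bQ : Basis (Fin (finrank ℝ W)) ℝ ((Fin n → ℝ) ⧸ K) :=
    Module.finBasisOfFinrankEq ℝ _ hQ with hbQ
  set P : (Fin n → ℝ) →ₗ[ℝ] (Fin (finrank ℝ W) → ℝ) :=
    (bQ.equivFun : ((Fin n → ℝ) ⧸ K) →ₗ[ℝ] (Fin (finrank ℝ W) → ℝ)) ∘ₗ K.mkQ with hP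
  have hsurj : Function.Surjective P := by
    rw [hP, LinearMap.coe_comp]
    exact bQ.equivFun.surjective.comp (Submodule.mkQ_surjective K)
  have hker : ∀ x x' : Fin n → ℝ, P x = P x' → x - x' ∈ K := by
    intro x x' hxx
    rw [hP] at hxx
    simp only [LinearMap.coe_comp, Function.comp_apply, LinearEquiv.coe_coe] at hxx
    have := bQ.equivFun.injective hxx
    rwa [Submodule.mkQ_apply, Submodule.mkQ_apply, Submodule.Quotient.eq] at this
  have hinv : ∀ x ∈ U, ∀ x' ∈ U, x - x' ∈ U → True := fun _ _ _ _ _ => trivial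
  have hinv2 : ∀ x ∈ U, ∀ x' ∈ U, x - x' ∈ K → f x - g x₀ x = f x' - g x₀ x' := by
    intro x hx x' hx' hmem
    have hzero : ∀ z ∈ U, g z (x - x') = g x₀ (x - x') := by
      intro z hz
      have hWmem : g z - g x₀ ∈ W := Submodule.subset_span ⟨z, hz, rfl⟩
      have := (Submodule.mem_dualCoannihilator _).1 hmem _ hWmem
      rw [LinearMap.sub_apply] at this
      linarith
    have h1 := tang x hx x' hx'
    have h2 := tang x' hx' x hx
    have e1 := hzero x' hx'
    have e2 : g x (x' - x) = g x₀ (x' - x) := by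
      have hmem' : x' - x ∈ K := by
        have := K.neg_mem hmem
        rwa [neg_sub] at this
      have hWmem : g x - g x₀ ∈ W := Submodule.subset_span ⟨x, hx, rfl⟩
      have := (Submodule.mem_dualCoannihilator _).1 hmem' _ hWmem
      rw [LinearMap.sub_apply] at this
      linarith
    rw [map_sub] at h1 h2 e1 e2
    rw [map_sub (g x₀)] at e1 e2
    linarith
  set c : (Fin (finrank ℝ W) → ℝ) → ℝ :=
    fun z => if hz : ∃ x, x ∈ U ∧ P x = z then f hz.choose - g x₀ hz.choose else 0
    with hc
  have hcP : ∀ x ∈ U, c (P x) = f x - g x₀ x := by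
    intro x hx
    have hz : ∃ x', x' ∈ U ∧ P x' = P x := ⟨x, hx, rfl⟩
    rw [hc]
    simp only
    rw [dif_pos hz]
    exact hinv2 _ hz.choose_spec.1 _ hx (hker _ _ hz.choose_spec.2)
  refine ⟨finrank ℝ W, hWlt, P, c, g x₀, hsurj, ⟨hUc.linear_image P, ?_⟩, ?_⟩
  · rintro z₁ ⟨x₁, hx₁, rfl⟩ z₂ ⟨x₂, hx₂, rfl⟩ a b ha hb hab
    have hxm : a • x₁ + b • x₂ ∈ U := hUc hx₁ hx₂ ha hb hab
    have hPm : a • P x₁ + b • P x₂ = P (a • x₁ + b • x₂) := by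
      rw [map_add, map_smul, map_smul]
    rw [hPm, hcP _ hxm, hcP _ hx₁, hcP _ hx₂]
    have hcv := hf.2 hx₁ hx₂ ha hb hab
    simp only [smul_eq_mul] at hcv ⊢
    rw [map_add, map_smul, map_smul]
    simp only [smul_eq_mul]
    linarith
  · intro x hx
    rw [hcP x hx]
    ring
end

section
/- Let d ≥ 2, f : ℝ^d → ℝ defined by f(x₁,...,x_d) = |x₁|, and let ε : ℝ^d → (0,∞) be a continuous function with lim_{|x|→∞} ε(x) = 0. Then there is no C¹ convex function g : ℝ^d → ℝ with |f(x) − g(x)| ≤ ε(x) for all x ∈ ℝ^d. -/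
/-!
On every line in a direction `v` along which `f` is constant, a convex `g` restricts to a convex
function of one variable that stays within `ε → 0` of a constant at both ends of the line. A convex
function on `ℝ` bounded above at both ends is constant, so `g = f` on the line. Taking `v = e₂`
gives `g x = |x₁|` everywhere, which is not differentiable at `0`.
-/

open Filter Topology Set

theorem ConvexOn.tendsto_atTop_of_lt {ψ : ℝ → ℝ} (hψ : ConvexOn ℝ univ ψ) {a b : ℝ}
    (hab : a < b) (hψab : ψ a < ψ b) : Tendsto ψ atTop atTop := by
  set s := (ψ b - ψ a) / (b - a)
  have hs : 0 < s := div_pos (sub_pos.2 hψab) (sub_pos.2 hab)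
  have hline : Tendsto (fun c => ψ b + s * (c - b)) atTop atTop :=
    tendsto_atTop_add_const_left _ _ <|
      (tendsto_atTop_add_const_right _ _ tendsto_id).const_mul_atTop hs
  refine tendsto_atTop_mono' _ ?_ hline
  filter_upwards [eventually_gt_atTop b] with c hbc
  have hslope := hψ.slope_mono_adjacent (mem_univ a) (mem_univ c) hab hbc
  rw [le_div_iff₀ (sub_pos.2 hbc)] at hslope
  linarith

theorem ConvexOn.tendsto_atBot_of_lt {ψ : ℝ → ℝ} (hψ : ConvexOn ℝ univ ψ) {a b : ℝ}
    (hab : a < b) (hψab : ψ b < ψ a) : Tendsto ψ atBot atTop := by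
  have hneg : ConvexOn ℝ univ (fun t => ψ (-t)) := hψ.comp_linearMap (-LinearMap.id)
  simpa [Function.comp_def] using
    (hneg.tendsto_atTop_of_lt (neg_lt_neg hab) (by simpa using hψab)).comp
      tendsto_neg_atBot_atTop

theorem ConvexOn.eq_of_isBoundedUnder_cocompact {ψ : ℝ → ℝ} (hψ : ConvexOn ℝ univ ψ)
    (hbdd : IsBoundedUnder (· ≤ ·) (cocompact ℝ) ψ) (a b : ℝ) : ψ a = ψ b := by
  wlog hab : a < b generalizing a b
  · rcases (not_lt.1 hab).eq_or_lt with rfl | hba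
    · rfl
    · exact (this b a hba).symm
  by_contra hne
  rcases lt_or_gt_of_ne hne with hlt | hgt
  · exact not_isBoundedUnder_of_tendsto_atTop (hψ.tendsto_atTop_of_lt hab hlt)
      (hbdd.mono atTop_le_cocompact)
  · exact not_isBoundedUnder_of_tendsto_atTop (hψ.tendsto_atBot_of_lt hab hgt)
      (hbdd.mono atBot_le_cocompact)

theorem ConvexOn.eq_of_abs_sub_le {E : Type*} [NormedAddCommGroup E] [NormedSpace ℝ E]
    {f g ε : E → ℝ} (hg : ConvexOn ℝ univ g) (hε : Tendsto ε (cocompact E) (𝓝 0))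
    (hfg : ∀ x, |f x - g x| ≤ ε x) {v : E} (hv : v ≠ 0) (hf : ∀ x (t : ℝ), f (x + t • v) = f x)
    (x : E) : g x = f x := by
  have hline : Tendsto (fun t : ℝ => x + t • v) (cocompact ℝ) (cocompact E) :=
    ((Homeomorph.addLeft x).isClosedEmbedding.comp
      (isClosedEmbedding_smul_left hv)).tendsto_cocompact
  have hconv : ConvexOn ℝ univ (fun t : ℝ => g (x + t • v)) :=
    (hg.translate_right x).comp_linearMap (LinearMap.toSpanSingleton ℝ E v)
  have hlim : Tendsto (fun t : ℝ => g (x + t • v)) (cocompact ℝ) (𝓝 (f x)) := by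
    rw [tendsto_iff_norm_sub_tendsto_zero]
    refine squeeze_zero (fun _ => norm_nonneg _) (fun t => ?_) (hε.comp hline)
    simpa [Real.norm_eq_abs, abs_sub_comm, hf] using hfg (x + t • v)
  have hconst : ∀ t : ℝ, g (x + t • v) = g x := fun t => by
    simpa using hconv.eq_of_isBoundedUnder_cocompact hlim.isBoundedUnder_le t 0
  exact tendsto_nhds_unique (tendsto_const_nhds.congr fun t => (hconst t).symm) hlim

theorem not_differentiableAt_abs_apply {ι : Type*} [Fintype ι] [DecidableEq ι] (i : ι) :
    ¬ DifferentiableAt ℝ (fun x : ι → ℝ => |x i|) 0 := by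
  intro h
  rw [← map_zero (ContinuousLinearMap.single ℝ (fun _ : ι => ℝ) i)] at h
  have := h.comp (0 : ℝ) (ContinuousLinearMap.single ℝ (fun _ : ι => ℝ) i).differentiableAt
  exact not_differentiableAt_abs_zero (by simpa [Function.comp_def] using this)

/-- For `d ≥ 2` and `f x = |x₁|` on ℝ^d, there is no C¹ convex function
approximating `f` within a continuous positive error tending to `0` at
infinity. -/
theorem no_C1_fine_approx_of_abs_coordinate (d : ℕ) (hd : 2 ≤ d)
    (ε : (Fin d → ℝ) → ℝ)
    (hεlim : Tendsto ε (Filter.cocompact (Fin d → ℝ)) (nhds 0)) :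
    ¬ ∃ g : (Fin d → ℝ) → ℝ,
        ContDiff ℝ 1 g ∧ ConvexOn ℝ Set.univ g ∧
        ∀ x, |(|x ⟨0, by omega⟩|) - g x| ≤ ε x := by
  rintro ⟨g, hg, hconv, happrox⟩
  have hv : (Pi.single ⟨1, by omega⟩ 1 : Fin d → ℝ) ≠ 0 := by simp
  have hg_eq : g = fun x => |x ⟨0, by omega⟩| := funext <|
    hconv.eq_of_abs_sub_le hεlim happrox hv fun x t => by simp
  exact not_differentiableAt_abs_apply _ (hg_eq ▸ hg.differentiable one_ne_zero 0)
end

section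
/- Let f : ℝ^d → ℝ be a convex function of the form f = c ∘ P + ℓ, where P : ℝ^d → ℝ^k is a linear projection with k < d, c : ℝ^k → ℝ is convex, and ℓ : ℝ^d → ℝ is linear. If g : ℝ^d → ℝ is any convex function such that |f(x) − g(x)| → 0 as |x| → ∞ along every line x + tv with v ∈ Ker P, v ≠ 0, then f = g. -/
/-!
Along a line `x + t • v` with `P v = 0`, the function `f` is affine in `t`, so
`φ t = g (x + t • v) - f (x + t • v)` is convex and tends to `0` at `±∞`. Midpoint
convexity gives `2 φ t ≤ φ (t - s) + φ (t + s)` and `2 φ (t + s) ≤ φ t + φ (t + 2 s)`;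
letting `s → ∞` yields `φ t ≤ 0 ≤ φ t`. Such a direction `v ≠ 0` exists since `k < d`.
-/

open Filter Topology Set

theorem ConvexOn.two_mul_le_apply_sub_add_apply_add {φ : ℝ → ℝ} (hφ : ConvexOn ℝ univ φ)
    (t s : ℝ) : 2 * φ t ≤ φ (t - s) + φ (t + s) := by
  have hhalf : (0 : ℝ) ≤ 1 / 2 := by norm_num
  have h := hφ.2 (mem_univ (t - s)) (mem_univ (t + s)) hhalf hhalf (by norm_num)
  have hmid : (1 / 2 : ℝ) • (t - s) + (1 / 2 : ℝ) • (t + s) = t := by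
    simp only [smul_eq_mul]; ring
  rw [hmid, smul_eq_mul, smul_eq_mul] at h
  linarith

theorem ConvexOn.eq_zero_of_tendsto_cocompact {φ : ℝ → ℝ} (hφ : ConvexOn ℝ univ φ)
    (hlim : Tendsto φ (cocompact ℝ) (𝓝 0)) (t : ℝ) : φ t = 0 := by
  rw [cocompact_eq_atBot_atTop, tendsto_sup] at hlim
  obtain ⟨hbot, htop⟩ := hlim
  have hsub : Tendsto (fun s => φ (t - s)) atTop (𝓝 0) :=
    hbot.comp (tendsto_atBot_add_const_left _ t tendsto_neg_atTop_atBot)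
  have hadd : Tendsto (fun s => φ (t + s)) atTop (𝓝 0) :=
    htop.comp (tendsto_atTop_add_const_left _ t tendsto_id)
  have hadd₂ : Tendsto (fun s => φ (t + 2 * s)) atTop (𝓝 0) :=
    htop.comp (tendsto_atTop_add_const_left _ t (tendsto_id.const_mul_atTop two_pos))
  have hle : 2 * φ t ≤ 0 := by
    refine ge_of_tendsto' (by simpa using hsub.add hadd) fun s => ?_
    exact hφ.two_mul_le_apply_sub_add_apply_add t s
  have hge : 0 ≤ φ t := by
    refine le_of_tendsto' (by simpa using (hadd.const_mul 2).sub hadd₂) fun s => ?_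
    have h := hφ.two_mul_le_apply_sub_add_apply_add (t + s) s
    rw [add_sub_cancel_right, add_assoc, ← two_mul] at h
    linarith
  linarith

theorem ConvexOn.comp_line {E : Type*} [AddCommGroup E] [Module ℝ E] {g : E → ℝ}
    (hg : ConvexOn ℝ univ g) (x v : E) : ConvexOn ℝ univ fun t : ℝ => g (x + t • v) :=
  (hg.translate_right x).comp_linearMap (LinearMap.toSpanSingleton ℝ E v)

theorem convex_approx_along_kernel_lines_eq_general (d k : ℕ) (hk : k < d)
    (P : (Fin d → ℝ) →ₗ[ℝ] (Fin k → ℝ))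
    (c : (Fin k → ℝ) → ℝ)
    (ℓ : (Fin d → ℝ) →ₗ[ℝ] ℝ)
    (f : (Fin d → ℝ) → ℝ) (hf : ∀ x, f x = c (P x) + ℓ x)
    (g : (Fin d → ℝ) → ℝ) (hg : ConvexOn ℝ Set.univ g)
    (happrox : ∀ (x : Fin d → ℝ), ∀ v ∈ LinearMap.ker P, v ≠ 0 →
      Tendsto (fun t : ℝ => |f (x + t • v) - g (x + t • v)|)
        (Filter.cocompact ℝ) (nhds 0)) :
    f = g := by
  obtain ⟨v, hv, hv0⟩ := (Submodule.ne_bot_iff _).mp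
    (LinearMap.ker_ne_bot_of_finrank_lt (f := P) (by simpa using hk))
  funext x
  have hf_line : ∀ t : ℝ, f (x + t • v) = f x + t * ℓ v := fun t => by
    rw [hf, hf, map_add, map_smul, LinearMap.mem_ker.mp hv, smul_zero, add_zero, map_add,
      map_smul, smul_eq_mul, add_assoc]
  have hconv : ConvexOn ℝ univ fun t : ℝ => g (x + t • v) - f (x + t • v) := by
    simp only [hf_line]
    exact (hg.comp_line x v).sub ((concaveOn_const (f x) convex_univ).add
      (((LinearMap.mul ℝ ℝ).flip (ℓ v)).concaveOn convex_univ))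
  have hlim : Tendsto (fun t : ℝ => g (x + t • v) - f (x + t • v)) (cocompact ℝ) (𝓝 0) := by
    have h := (tendsto_zero_iff_abs_tendsto_zero _).mpr (happrox x v hv hv0)
    simpa only [neg_sub, neg_zero] using h.neg
  simpa [sub_eq_zero, eq_comm] using hconv.eq_zero_of_tendsto_cocompact hlim 0

/-- If `f = c ∘ P + ℓ` with `P` a linear projection with nontrivial kernel,
and a convex `g` satisfies `|f - g| → 0` along every line in a kernel
direction, then `f = g`. -/
theorem convex_approx_along_kernel_lines_eq (d k : ℕ) (hk : k < d)
    (P : (Fin d → ℝ) →ₗ[ℝ] (Fin k → ℝ)) (hP : Function.Surjective P)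
    (c : (Fin k → ℝ) → ℝ) (hc : ConvexOn ℝ Set.univ c)
    (ℓ : (Fin d → ℝ) →ₗ[ℝ] ℝ)
    (f : (Fin d → ℝ) → ℝ) (hf : ∀ x, f x = c (P x) + ℓ x)
    (g : (Fin d → ℝ) → ℝ) (hg : ConvexOn ℝ Set.univ g)
    (happrox : ∀ (x : Fin d → ℝ), ∀ v ∈ LinearMap.ker P, v ≠ 0 →
      Tendsto (fun t : ℝ => |f (x + t • v) - g (x + t • v)|)
        (Filter.cocompact ℝ) (nhds 0)) :
    f = g :=
  convex_approx_along_kernel_lines_eq_general d k hk P c ℓ f hf g hg happrox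
end

section
/- Let C ⊆ ℝ^d be a k-dimensional corner function with k = d+1, i.e. C(x) = max_{1≤j≤d+1}{ℓ_j(x) + b_j} where the d+1 affine functionals L_j(x, x_{d+1}) = x_{d+1} − ℓ_j(x) are linearly independent on ℝ^{d+1}. Then there exists a linear functional ℓ : ℝ^d → ℝ such that C(x) − ℓ(x) → ∞ as |x| → ∞. -/
/-!
Averaging, `ℓ₀ = (d + 1)⁻¹ ∑ ℓⱼ`, makes the differences `ℓⱼ x - ℓ₀ x` sum to zero, so their largest
one is at least a fixed fraction of their sup norm. Independence of the `Lⱼ` (they then span the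
dual of `ℝ^d × ℝ`) says that `(x, t)` is killed by all `Lⱼ` only for `(x, t) = 0`; hence the `ℓⱼ`
agree at `x` only for `x = 0`, the map `x ↦ (ℓⱼ x - ℓ₀ x)ⱼ` is injective and thus bounded below,
and `max (ℓⱼ + bⱼ) - ℓ₀` grows at least linearly in `‖x‖`.
-/

open Filter

theorem exists_norm_le_card_mul_of_sum_eq_zero {ι : Type*} [Fintype ι] [Nonempty ι]
    (y : ι → ℝ) (hy : ∑ i, y i = 0) : ∃ j, ‖y‖ ≤ Fintype.card ι * y j := by
  obtain ⟨j, hj⟩ := Finite.exists_max y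
  refine ⟨j, ?_⟩
  have hgap : ∑ i, (y j - y i) = Fintype.card ι * y j := by
    simp [Finset.sum_sub_distrib, hy]
  have hgap_le : ∀ i, y j - y i ≤ Fintype.card ι * y j := fun i =>
    hgap ▸ Finset.single_le_sum (fun k _ => sub_nonneg.2 (hj k)) (Finset.mem_univ i)
  have hcard : (1 : ℝ) ≤ Fintype.card ι := by exact_mod_cast Fintype.card_pos
  have hmax_nonneg : 0 ≤ y j :=
    (mul_nonneg_iff_of_pos_left (zero_lt_one.trans_le hcard)).1 (by simpa using hgap_le j)
  refine (pi_norm_le_iff_of_nonneg (by positivity)).2 fun i => abs_le.2 ⟨?_, ?_⟩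
  · linarith [hgap_le i]
  · exact (hj i).trans (le_mul_of_one_le_left hmax_nonneg hcard)

section LinearAlgebra

variable {ι V : Type*} [Fintype ι] [AddCommGroup V] [Module ℝ V] [FiniteDimensional ℝ V]

theorem eq_zero_of_forall_apply_eq_of_linearIndependent (ℓ : ι → V →ₗ[ℝ] ℝ)
    (hcard : Fintype.card ι = Module.finrank ℝ V + 1)
    (hind : LinearIndependent ℝ fun j => LinearMap.snd ℝ V ℝ - (ℓ j).comp (LinearMap.fst ℝ V ℝ))
    {x : V} {c : ℝ} (hx : ∀ j, ℓ j x = c) : x = 0 := by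
  have : Nonempty ι := Fintype.card_pos_iff.1 (by omega)
  have hspan := hind.span_eq_top_of_card_eq_finrank (by simp [hcard])
  have hker : ⊤ ≤ LinearMap.ker (Module.Dual.eval ℝ (V × ℝ) (x, c)) := by
    rw [← hspan, Submodule.span_le]
    rintro _ ⟨j, rfl⟩
    simp [hx j]
  have hxc : (x, c) = 0 :=
    (Module.forall_dual_apply_eq_zero_iff ℝ _).1 fun φ => hker Submodule.mem_top
  exact congrArg Prod.fst hxc

end LinearAlgebra

section Coercivity

variable {ι V : Type*} [Fintype ι] [Nonempty ι]
  [NormedAddCommGroup V] [NormedSpace ℝ V] [FiniteDimensional ℝ V]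

theorem exists_pos_mul_norm_le_sub_average (ℓ : ι → V →ₗ[ℝ] ℝ)
    (hℓ : ∀ (x : V) (c : ℝ), (∀ j, ℓ j x = c) → x = 0) :
    ∃ C > 0, ∀ x, ∃ j, C * ‖x‖ ≤ ℓ j x - ((Fintype.card ι : ℝ)⁻¹ • ∑ i, ℓ i) x := by
  set ℓ₀ := (Fintype.card ι : ℝ)⁻¹ • ∑ i, ℓ i
  set T : V →ₗ[ℝ] ι → ℝ := LinearMap.pi fun j => ℓ j - ℓ₀
  have hcard : (0 : ℝ) < Fintype.card ι := by exact_mod_cast Fintype.card_pos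
  have hsum (x : V) : ∑ j, T x j = 0 := by
    simp [T, ℓ₀, Finset.sum_sub_distrib, hcard.ne']
  have hker : LinearMap.ker T = ⊥ := by
    refine LinearMap.ker_eq_bot'.2 fun x hx => hℓ x (ℓ₀ x) fun j => ?_
    exact sub_eq_zero.1 (congrFun hx j)
  obtain ⟨K, hK, hanti⟩ := T.exists_antilipschitzWith hker
  refine ⟨(K * Fintype.card ι)⁻¹, by positivity, fun x => ?_⟩
  obtain ⟨j, hj⟩ := exists_norm_le_card_mul_of_sum_eq_zero (T x) (hsum x)
  refine ⟨j, ?_⟩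
  have hx : ‖x‖ ≤ K * ‖T x‖ := by simpa using hanti.le_mul_dist x 0
  have hKpos : (0 : ℝ) < K := hK
  rw [inv_mul_le_iff₀ (by positivity), mul_assoc]
  exact hx.trans (mul_le_mul_of_nonneg_left hj hKpos.le)

theorem tendsto_iSup_add_sub_average_cocompact (ℓ : ι → V →ₗ[ℝ] ℝ) (b : ι → ℝ)
    (hℓ : ∀ (x : V) (c : ℝ), (∀ j, ℓ j x = c) → x = 0) :
    Tendsto (fun x => (⨆ j, ℓ j x + b j) - ((Fintype.card ι : ℝ)⁻¹ • ∑ i, ℓ i) x)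
      (cocompact V) atTop := by
  obtain ⟨C, hC, hgrowth⟩ := exists_pos_mul_norm_le_sub_average ℓ hℓ
  obtain ⟨j₀, hj₀⟩ := Finite.exists_min b
  refine tendsto_atTop_mono (fun x => ?_)
    (tendsto_atTop_add_const_right _ (b j₀) (tendsto_norm_cocompact_atTop.const_mul_atTop hC))
  obtain ⟨j, hj⟩ := hgrowth x
  have hle : ℓ j x + b j ≤ ⨆ i, ℓ i x + b i :=
    le_ciSup (f := fun i => ℓ i x + b i) (Finite.bddAbove_range _) j
  linarith [hj₀ j]

end Coercivity

/-- If `C` is a `(d+1)`-dimensional corner function on ℝ^d, there is a linear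
functional `ℓ₀` with `C x - ℓ₀ x → ∞` as `|x| → ∞`. -/
theorem corner_coercive_after_linear_shift (d : ℕ)
    (ℓ : Fin (d + 1) → (Fin d → ℝ) →ₗ[ℝ] ℝ) (b : Fin (d + 1) → ℝ)
    (hind : LinearIndependent ℝ
      (fun j : Fin (d + 1) =>
        (LinearMap.snd ℝ (Fin d → ℝ) ℝ) -
          (ℓ j).comp (LinearMap.fst ℝ (Fin d → ℝ) ℝ))) :
    ∃ ℓ₀ : (Fin d → ℝ) →ₗ[ℝ] ℝ,
      Tendsto (fun x : Fin d → ℝ => (⨆ j, (ℓ j x + b j)) - ℓ₀ x)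
        (Filter.cocompact (Fin d → ℝ)) atTop :=
  ⟨_, tendsto_iSup_add_sub_average_cocompact ℓ b fun _ _ hx =>
    eq_zero_of_forall_apply_eq_of_linearIndependent ℓ (by simp) hind hx⟩
end
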